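/- arXiv:1207.3721 — 3 statements merged into one kernel-verified Lean document; each statement's English description precedes it below -/
import Mathlib

section
/- Fix a>1/4 and p∈ℝ, and let H(r,θ) = ((1-r²)/(1+r²-2r cos θ))^p, F(r,θ) = 2r sin θ/(1+r²-2r cos θ), J(r,θ) = r(1-r²)/(1+r²-2r cos θ). Then for all 0<r<1 and θ with 1+r²-2r cos θ ≠ 0, H_{θθ} + aF H_θ + aJ H_r + (a-1/4) F_θ H = (a-p) F H_θ + (ap - p + a - 1/4) F_θ H. -/
open Real

noncomputable def H1 (p r θ : ℝ) : ℝ := ((1 - r^2) / (1 + r^2 - 2*r*Real.cos θ)) ^ p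

noncomputable def F1 (r θ : ℝ) : ℝ := 2*r*Real.sin θ / (1 + r^2 - 2*r*Real.cos θ)

noncomputable def J1 (r θ : ℝ) : ℝ := r*(1 - r^2) / (1 + r^2 - 2*r*Real.cos θ)

/-!
Write `H = u ^ p` with `u = (1 - r²) / (1 + r² - 2 r cos θ)`. The logarithmic derivatives of `u`
are `∂_θ log u = -F` and `J ∂_r log u = F_θ`, so `H_θ = -p F H`, `H_θθ = (p² F² - p F_θ) H` and
`J H_r = p F_θ H`. Substituting these, the identity becomes a polynomial identity in `a`, `p`, `F`,
`F_θ` and `H`.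
-/

lemma HasDerivAt.rpow_const_of_logDeriv {u : ℝ → ℝ} {u' ℓ x : ℝ} (hu : HasDerivAt u u' x)
    (hx : u x ≠ 0) (hℓ : u' = ℓ * u x) (p : ℝ) :
    HasDerivAt (fun y => u y ^ p) (p * ℓ * u x ^ p) x := by
  refine (hu.rpow_const (p := p) (Or.inl hx)).congr_deriv ?_
  rw [hℓ, rpow_sub_one hx]
  field_simp

lemma one_add_sq_sub_two_mul_mul_cos_ne_zero {r : ℝ} (hr : r ^ 2 ≠ 1) (θ : ℝ) :
    1 + r^2 - 2*r*cos θ ≠ 0 := by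
  intro h
  have hsum : (r - cos θ)^2 + sin θ^2 = 0 := by linear_combination h + sin_sq_add_cos_sq θ
  have hsin : sin θ^2 = 0 := by linarith [sq_nonneg (r - cos θ), sq_nonneg (sin θ)]
  have hcos : r - cos θ = 0 := (pow_eq_zero_iff two_ne_zero).mp (by linarith)
  exact hr (by linear_combination hcos * (r + cos θ) - hsin + sin_sq_add_cos_sq θ)

lemma hasDerivAt_one_add_sq_sub_two_mul_mul_cos_theta (r θ : ℝ) :
    HasDerivAt (fun θ' => 1 + r^2 - 2*r*cos θ') (2*r*sin θ) θ := by
  simpa using ((hasDerivAt_cos θ).const_mul (2*r)).const_sub (1 + r^2)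

lemma hasDerivAt_one_add_sq_sub_two_mul_mul_cos_r (r θ : ℝ) :
    HasDerivAt (fun r' => 1 + r'^2 - 2*r'*cos θ) (2*r - 2*cos θ) r := by
  have h := ((hasDerivAt_pow 2 r).const_add 1).fun_sub
    (((hasDerivAt_id' r).const_mul 2).mul_const (cos θ))
  refine h.congr_deriv ?_
  push_cast
  ring

section

variable {r : ℝ}

lemma hasDerivAt_F1_theta (hr : r ^ 2 ≠ 1) (θ : ℝ) :
    HasDerivAt (fun θ' => F1 r θ')
      (2*r*((1 + r^2)*cos θ - 2*r) / (1 + r^2 - 2*r*cos θ)^2) θ := by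
  have hD := one_add_sq_sub_two_mul_mul_cos_ne_zero hr θ
  have h := ((hasDerivAt_sin θ).const_mul (2*r)).fun_div
    (hasDerivAt_one_add_sq_sub_two_mul_mul_cos_theta r θ) hD
  refine h.congr_deriv ?_
  field_simp
  linear_combination (-2*r^2) * sin_sq_add_cos_sq θ

lemma hasDerivAt_H1_theta (hr : r ^ 2 ≠ 1) (p θ : ℝ) :
    HasDerivAt (fun θ' => H1 p r θ') (-p * F1 r θ * H1 p r θ) θ := by
  have hD := one_add_sq_sub_two_mul_mul_cos_ne_zero hr θ
  have h1r : 1 - r^2 ≠ 0 := sub_ne_zero.mpr (Ne.symm hr)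
  have hu := (hasDerivAt_const θ (1 - r^2)).fun_div
    (hasDerivAt_one_add_sq_sub_two_mul_mul_cos_theta r θ) hD
  refine (hu.rpow_const_of_logDeriv (div_ne_zero h1r hD) (ℓ := -F1 r θ) ?_ p).congr_deriv ?_
  · unfold F1
    field_simp
    ring
  · unfold H1
    ring

lemma deriv_deriv_H1_theta (hr : r ^ 2 ≠ 1) (p θ : ℝ) :
    deriv (fun θ' => deriv (fun θ'' => H1 p r θ'') θ') θ
      = p^2 * F1 r θ^2 * H1 p r θ - p * deriv (fun θ' => F1 r θ') θ * H1 p r θ := by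
  have hfun : (fun θ' => deriv (fun θ'' => H1 p r θ'') θ')
      = fun θ' => -p * F1 r θ' * H1 p r θ' :=
    funext fun θ' => (hasDerivAt_H1_theta hr p θ').deriv
  rw [hfun, (((hasDerivAt_F1_theta hr θ).const_mul (-p)).fun_mul (hasDerivAt_H1_theta hr p θ)).deriv,
    (hasDerivAt_F1_theta hr θ).deriv]
  ring

lemma J1_mul_deriv_H1_r (hr : r ^ 2 ≠ 1) (p θ : ℝ) :
    J1 r θ * deriv (fun r' => H1 p r' θ) r
      = p * deriv (fun θ' => F1 r θ') θ * H1 p r θ := by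
  have hD := one_add_sq_sub_two_mul_mul_cos_ne_zero hr θ
  have h1r : 1 - r^2 ≠ 0 := sub_ne_zero.mpr (Ne.symm hr)
  have hu := ((hasDerivAt_pow 2 r).const_sub 1).fun_div
    (hasDerivAt_one_add_sq_sub_two_mul_mul_cos_r r θ) hD
  have h : HasDerivAt (fun r' => H1 p r' θ)
      (p * (-2*r/(1 - r^2) - (2*r - 2*cos θ)/(1 + r^2 - 2*r*cos θ)) * H1 p r θ) r :=
    hu.rpow_const_of_logDeriv (div_ne_zero h1r hD) (by
      push_cast
      -- as an atom, the denominator is not renormalized by `field_simp` out of reach of `hD`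
      generalize 1 + r^2 - 2*r*cos θ = D at hD ⊢
      field_simp) p
  rw [h.deriv, (hasDerivAt_F1_theta hr θ).deriv]
  unfold J1
  generalize hDdef : 1 + r^2 - 2*r*cos θ = D at hD ⊢
  field_simp
  subst hDdef
  ring

end

theorem stmt_1_general (a p : ℝ) (r θ : ℝ) (hr0 : 0 < r) (hr1 : r < 1) :
    deriv (fun θ' => deriv (fun θ'' => H1 p r θ'') θ') θ
      + a * F1 r θ * deriv (fun θ' => H1 p r θ') θ
      + a * J1 r θ * deriv (fun r' => H1 p r' θ) r
      + (a - 1/4) * deriv (fun θ' => F1 r θ') θ * H1 p r θ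
    = (a - p) * F1 r θ * deriv (fun θ' => H1 p r θ') θ
      + (a*p - p + a - 1/4) * deriv (fun θ' => F1 r θ') θ * H1 p r θ := by
  have hr : r ^ 2 ≠ 1 := by nlinarith
  rw [deriv_deriv_H1_theta hr, (hasDerivAt_H1_theta hr p θ).deriv]
  linear_combination a * J1_mul_deriv_H1_r hr p θ

/-- identity (3.9) for H = u_𝔻^p. -/
theorem stmt_1 (a p : ℝ) (ha : 1/4 < a) (r θ : ℝ) (hr0 : 0 < r) (hr1 : r < 1)
    (hden : 1 + r^2 - 2*r*Real.cos θ ≠ 0) :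
    deriv (fun θ' => deriv (fun θ'' => H1 p r θ'') θ') θ
      + a * F1 r θ * deriv (fun θ' => H1 p r θ') θ
      + a * J1 r θ * deriv (fun r' => H1 p r' θ) r
      + (a - 1/4) * deriv (fun θ' => F1 r θ') θ * H1 p r θ
    = (a - p) * F1 r θ * deriv (fun θ' => H1 p r θ') θ
      + (a*p - p + a - 1/4) * deriv (fun θ' => F1 r θ') θ * H1 p r θ :=
  stmt_1_general a p r θ hr0 hr1
end

section
/- Fix a > 1/4 and let d = 1 + 1/(4a) (so d = 1 + κ/8 with a = 2/κ), p = (4a−1) − 2(2−d), ζ = (4a−1) − (2−d). Define u(x,y) = sinh y cosh y/(sin²x + sinh²y), v(x,y) = sin x cos x/(sin²x + sinh²y), ρ = −v_x, and H(x,y) = (sin²x + sinh²y)^{p/2} u(x,y)^ζ. Then H satisfies (1/2)H_{xx} + a v H_x − a u H_y + (1/4 − a) ρ H + a p H = 0 for all (x,y) with y > 0. -/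
noncomputable def uCyl (x y : ℝ) : ℝ :=
  Real.sinh y * Real.cosh y / (Real.sin x ^ 2 + Real.sinh y ^ 2)

noncomputable def vCyl (x y : ℝ) : ℝ :=
  Real.sin x * Real.cos x / (Real.sin x ^ 2 + Real.sinh y ^ 2)

/-- ρ = -v_x -/
noncomputable def rhoCyl (x y : ℝ) : ℝ := -(deriv (fun x' => vCyl x' y) x)

set_option maxHeartbeats 2000000 in
/-- Lemma 4.1: with d = 1 + 1/(4a), p = (4a-1) - 2(2-d),
ζ = (4a-1) - (2-d), the function H(x,y) = (sin²x+sinh²y)^{p/2} u(x,y)^ζ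
satisfies (1/2)H_xx + a v H_x - a u H_y + (1/4-a) ρ H + a p H = 0 for y > 0. -/
theorem stmt_6 (a : ℝ) (ha : 1/4 < a) (d p ζ : ℝ)
    (hd : d = 1 + 1/(4*a)) (hp : p = (4*a - 1) - 2*(2 - d)) (hζ : ζ = (4*a - 1) - (2 - d))
    (H : ℝ → ℝ → ℝ)
    (hH : ∀ x y, H x y = (Real.sin x ^ 2 + Real.sinh y ^ 2) ^ (p/2) * uCyl x y ^ ζ)
    (x y : ℝ) (hy : 0 < y) :
    (1/2) * deriv (fun x' => deriv (fun x'' => H x'' y) x') x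
      + a * vCyl x y * deriv (fun x' => H x' y) x
      - a * uCyl x y * deriv (fun y' => H x y') y
      + (1/4 - a) * rhoCyl x y * H x y
      + a * p * H x y = 0 := by
  subst hd hp hζ
  set Z : ℝ := 4*a - 1 - (2 - (1 + 1/(4*a))) with hZdef
  have ha0 : (0:ℝ) < a := lt_trans (by norm_num) ha
  set q : ℝ := 1/2 - 2*a with hqdef
  have hq : (4*a - 1 - 2*(2 - (1 + 1/(4*a))))/2 - Z = q := by
    rw [hqdef, hZdef]; field_simp; ring
  -- positivity facts
  have hshy : 0 < Real.sinh y := Real.sinh_pos_iff.2 hy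
  have hchy : 0 < Real.cosh y := Real.cosh_pos y
  have hshch : 0 < Real.sinh y * Real.cosh y := mul_pos hshy hchy
  have hS : ∀ x', 0 < Real.sin x' ^ 2 + Real.sinh y ^ 2 := by
    intro x'; have := pow_pos hshy 2; nlinarith [sq_nonneg (Real.sin x')]
  -- rewrite H on the half plane
  have hH' : ∀ x' y', 0 < y' → H x' y' =
      (Real.sinh y' * Real.cosh y') ^ Z *
        (Real.sin x' ^ 2 + Real.sinh y' ^ 2) ^ q := by
    intro x' y' hy'
    have hsh' : 0 < Real.sinh y' := Real.sinh_pos_iff.2 hy'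
    have hch' : 0 < Real.cosh y' := Real.cosh_pos y'
    have hS' : 0 < Real.sin x' ^ 2 + Real.sinh y' ^ 2 := by
      have := pow_pos hsh' 2; nlinarith [sq_nonneg (Real.sin x')]
    rw [hH, uCyl, Real.div_rpow (mul_pos hsh' hch').le hS'.le,
      show (4*a - 1 - 2*(2 - (1 + 1/(4*a))))/2 = q + Z from by rw [← hq]; ring,
      Real.rpow_add hS']
    have hZpos := Real.rpow_pos_of_pos hS' Z
    field_simp
  set C : ℝ := (Real.sinh y * Real.cosh y) ^ Z with hCdef
  set s : ℝ := Real.sin x with hsdef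
  set c : ℝ := Real.cos x with hcdef
  set sh : ℝ := Real.sinh y with hshdef
  set ch : ℝ := Real.cosh y with hchdef
  -- x-direction first derivative
  have hSx : ∀ x', HasDerivAt (fun x'' => Real.sin x'' ^ 2 + Real.sinh y ^ 2)
      (2 * Real.sin x' * Real.cos x') x' := by
    intro x'
    have h := ((Real.hasDerivAt_sin x').pow 2).add_const (Real.sinh y ^ 2)
    exact h.congr_deriv (by push_cast; ring)
  have hfun : (fun x'' => H x'' y) =
      fun x'' => C * (Real.sin x'' ^ 2 + Real.sinh y ^ 2) ^ q := by
    funext x''; rw [hH' x'' y hy]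
  have hH1 : ∀ x', HasDerivAt (fun x'' => H x'' y)
      (C * (2 * Real.sin x' * Real.cos x' * q *
        (Real.sin x' ^ 2 + Real.sinh y ^ 2) ^ (q - 1))) x' := by
    intro x'
    rw [hfun]
    exact ((hSx x').rpow_const (Or.inl (hS x').ne')).const_mul C
  have hderiv1 : (fun x' => deriv (fun x'' => H x'' y) x') =
      fun x' => C * (2 * Real.sin x' * Real.cos x' * q *
        (Real.sin x' ^ 2 + Real.sinh y ^ 2) ^ (q - 1)) := by
    funext x'; exact (hH1 x').deriv
  -- x-direction second derivative
  have hH2 : deriv (fun x' => deriv (fun x'' => H x'' y) x') x =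
      C * q * ((2 * (c * c - s * s)) * (s ^ 2 + sh ^ 2) ^ (q - 1)
        + (2 * s * c) * ((2 * s * c) * (q - 1) * (s ^ 2 + sh ^ 2) ^ (q - 2))) := by
    rw [hderiv1]
    have hu : HasDerivAt (fun x' => 2 * Real.sin x' * Real.cos x')
        (2 * (c * c - s * s)) x := by
      have h := ((Real.hasDerivAt_sin x).mul (Real.hasDerivAt_cos x)).const_mul 2
      have hfe : (fun x' => 2 * Real.sin x' * Real.cos x') =
          fun x' => 2 * (Real.sin x' * Real.cos x') := by funext t; ring
      rw [hfe]
      exact h.congr_deriv (by rw [hsdef, hcdef]; ring)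
    have hv : HasDerivAt (fun x' => (Real.sin x' ^ 2 + Real.sinh y ^ 2) ^ (q - 1))
        ((2 * s * c) * (q - 1) * (s ^ 2 + sh ^ 2) ^ (q - 1 - 1)) x :=
      (hSx x).rpow_const (Or.inl (hS x).ne')
    have h := ((hu.mul hv).const_mul (C * q))
    have h2 : deriv (fun x' => C * (2 * Real.sin x' * Real.cos x' * q *
        (Real.sin x' ^ 2 + Real.sinh y ^ 2) ^ (q - 1))) x
        = deriv (fun x' => (C * q) * ((2 * Real.sin x' * Real.cos x') *
        (Real.sin x' ^ 2 + Real.sinh y ^ 2) ^ (q - 1))) x := by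
      congr 1; funext t; ring
    rw [h2, HasDerivAt.deriv (f := fun x' => (C * q) * ((2 * Real.sin x' * Real.cos x') *
          (Real.sin x' ^ 2 + Real.sinh y ^ 2) ^ (q - 1))) h, show q - 1 - 1 = q - 2 from by ring, ← hsdef, ← hcdef, ← hshdef]
  -- y-direction derivative
  have hHy : deriv (fun y' => H x y') y =
      ((ch * ch + sh * sh) * Z * (sh * ch) ^ (Z - 1)) * (s ^ 2 + sh ^ 2) ^ q
        + C * ((2 * sh * ch) * q * (s ^ 2 + sh ^ 2) ^ (q - 1)) := by
    have hEq : (fun y' => H x y') =ᶠ[nhds y]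
        fun y' => (Real.sinh y' * Real.cosh y') ^ Z *
          (Real.sin x ^ 2 + Real.sinh y' ^ 2) ^ q := by
      filter_upwards [Ioi_mem_nhds hy] with y' hy'
      exact hH' x y' hy'
    rw [hEq.deriv_eq]
    have h1 : HasDerivAt (fun y' => Real.sinh y' * Real.cosh y') (ch * ch + sh * sh) y := by
      have h := (Real.hasDerivAt_sinh y).mul (Real.hasDerivAt_cosh y)
      exact h.congr_deriv (by rw [hshdef, hchdef])
    have h1' := h1.rpow_const (p := Z) (Or.inl hshch.ne')
    have h2 : HasDerivAt (fun y' => Real.sin x ^ 2 + Real.sinh y' ^ 2) (2 * sh * ch) y := by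
      have h := ((Real.hasDerivAt_sinh y).pow 2).const_add (Real.sin x ^ 2)
      exact h.congr_deriv (by rw [hshdef, hchdef]; push_cast; ring)
    have h2' := h2.rpow_const (p := q) (Or.inl (hS x).ne')
    rw [HasDerivAt.deriv (f := fun y' => (Real.sinh y' * Real.cosh y') ^ Z *
            (Real.sin x ^ 2 + Real.sinh y' ^ 2) ^ q) (h1'.mul h2'), ← hsdef, ← hshdef, ← hchdef]
  -- first x-derivative at the point
  have hHx : deriv (fun x' => H x' y) x =
      C * (2 * s * c * q * (s ^ 2 + sh ^ 2) ^ (q - 1)) := by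
    rw [(hH1 x).deriv, ← hsdef, ← hcdef, ← hshdef]
  -- rho
  have hrho : rhoCyl x y =
      -(((c * c - s * s) * (s ^ 2 + sh ^ 2) - s * c * (2 * s * c)) / (s ^ 2 + sh ^ 2) ^ 2) := by
    rw [rhoCyl]
    congr 1
    have hnum : HasDerivAt (fun x' => Real.sin x' * Real.cos x') (c * c - s * s) x := by
      have h := (Real.hasDerivAt_sin x).mul (Real.hasDerivAt_cos x)
      exact h.congr_deriv (by rw [hsdef, hcdef]; ring)
    have h := hnum.div (hSx x) (hS x).ne'
    have hfe : (fun x' => vCyl x' y) = fun x' => Real.sin x' * Real.cos x' /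
        (Real.sin x' ^ 2 + Real.sinh y ^ 2) := by funext t; rw [vCyl]
    rw [hfe, HasDerivAt.deriv (f := fun x' => Real.sin x' * Real.cos x' /
          (Real.sin x' ^ 2 + Real.sinh y ^ 2)) h, ← hsdef, ← hcdef, ← hshdef]
  -- value of H
  have hHval : H x y = C * (s ^ 2 + sh ^ 2) ^ q := hH' x y hy
  -- rpow manipulations
  have e1 : (s ^ 2 + sh ^ 2) ^ (q - 1) = (s ^ 2 + sh ^ 2) ^ (q - 2) * (s ^ 2 + sh ^ 2) := by
    rw [show q - 1 = (q - 2) + 1 from by ring, Real.rpow_add_one (hS x).ne']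
  have e2 : (s ^ 2 + sh ^ 2) ^ q = (s ^ 2 + sh ^ 2) ^ (q - 2) * (s ^ 2 + sh ^ 2) ^ (2:ℕ) := by
    rw [← Real.rpow_natCast (s ^ 2 + sh ^ 2) 2, ← Real.rpow_add (hS x)]
    congr 1
    push_cast
    ring
  have e3 : (sh * ch) ^ (Z - 1) = C / (sh * ch) :=
    Real.rpow_sub_one hshch.ne' _
  have hpy : s ^ 2 + c ^ 2 = 1 := Real.sin_sq_add_cos_sq x
  have hcosh : ch ^ 2 - sh ^ 2 = 1 := Real.cosh_sq_sub_sinh_sq y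
  have huv : uCyl x y = sh * ch / (s ^ 2 + sh ^ 2) := rfl
  have hvv : vCyl x y = s * c / (s ^ 2 + sh ^ 2) := rfl
  have hSne := (hS x).ne'
  rw [hH2, hHx, hHy, hrho, hHval, huv, hvv, e3, e1, e2, hqdef, hZdef]
  set B : ℝ := (s ^ 2 + sh ^ 2) ^ (1/2 - 2*a - 2) with hBdef
  field_simp
  have hc2 : c ^ 2 = 1 - s ^ 2 := by linarith
  have hch2 : ch ^ 2 = 1 + sh ^ 2 := by linarith
  have hch3 : ch ^ 3 = ch * (1 + sh ^ 2) := by rw [pow_succ, hch2]; ring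
  ring_nf
  simp only [hc2, hch2, hch3]
  ring
end

section
/- Suppose Y: [0,∞) → (0,∞) is differentiable and satisfies −a coth(Y_t) ≤ Y_t' ≤ −a tanh(Y_t) for all t ≥ 0 (for a fixed a>0), with Y_0 = y > 0. Then for all t ≥ 0 with (cosh y)e^{−at} ≥ 1: arccosh((cosh y) e^{−at}) ≤ Y_t ≤ arcsinh((sinh y) e^{−at}). -/
/-!
Along the flow, `(sinh Y)' = cosh Y · Y' ≤ -a sinh Y` and `(cosh Y)' = sinh Y · Y' ≥ -a cosh Y`
(using `Y > 0` for the latter). Hence `e^{at} sinh Y_t` is nonincreasing and `e^{at} cosh Y_t`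
is nondecreasing, and the bounds follow by applying `arsinh` and `arcosh`, which are monotone.
-/

/-- inverse hyperbolic cosine -/
noncomputable def arcosh (x : ℝ) : ℝ := Real.log (x + Real.sqrt (x^2 - 1))

section LinearDifferentialInequality

open Real Set

variable {f f' : ℝ → ℝ} {c : ℝ}

theorem le_mul_exp_of_hasDerivAt_of_le_mul (hf : ∀ t, 0 ≤ t → HasDerivAt f (f' t) t)
    (hle : ∀ t, 0 ≤ t → f' t ≤ c * f t) {t : ℝ} (ht : 0 ≤ t) :
    f t ≤ f 0 * exp (c * t) := by
  have hexp (s : ℝ) : HasDerivAt (fun s ↦ exp (-c * s)) (exp (-c * s) * -c) s := by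
    simpa using ((hasDerivAt_id s).const_mul (-c)).exp
  have hg (s : ℝ) (hs : 0 ≤ s) : HasDerivAt (fun s ↦ f s * exp (-c * s))
      (f' s * exp (-c * s) + f s * (exp (-c * s) * -c)) s :=
    (hf s hs).mul (hexp s)
  have hanti : AntitoneOn (fun s ↦ f s * exp (-c * s)) (Ici 0) := by
    refine antitoneOn_of_hasDerivWithinAt_nonpos (convex_Ici 0)
      (f' := fun s ↦ f' s * exp (-c * s) + f s * (exp (-c * s) * -c))
      (fun s hs ↦ (hg s hs).continuousAt.continuousWithinAt) (fun s hs ↦ ?_) (fun s hs ↦ ?_)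
    all_goals rw [interior_Ici] at hs
    · exact (hg s hs.le).hasDerivWithinAt
    · have := mul_le_mul_of_nonneg_right (hle s hs.le) (exp_pos (-c * s)).le
      linarith
  have hdecay : f t * exp (-c * t) ≤ f 0 := by
    simpa using hanti self_mem_Ici ht ht
  calc f t = f t * exp (-c * t) * exp (c * t) := by
        rw [mul_assoc, ← exp_add, neg_mul, neg_add_cancel, exp_zero, mul_one]
    _ ≤ f 0 * exp (c * t) := by gcongr

theorem mul_exp_le_of_hasDerivAt_of_mul_le (hf : ∀ t, 0 ≤ t → HasDerivAt f (f' t) t)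
    (hge : ∀ t, 0 ≤ t → c * f t ≤ f' t) {t : ℝ} (ht : 0 ≤ t) :
    f 0 * exp (c * t) ≤ f t := by
  have := le_mul_exp_of_hasDerivAt_of_le_mul (f := -f) (f' := -f') (fun s hs ↦ (hf s hs).neg)
    (fun s hs ↦ by simpa using hge s hs) ht
  simp only [Pi.neg_apply, neg_mul, neg_le_neg_iff] at this
  exact this

end LinearDifferentialInequality

section RadialLoewnerComparison

open Real

variable {a : ℝ} {Y : ℝ → ℝ}

theorem sinh_le_mul_exp_of_deriv_le_neg_mul_tanh (hdiff : Differentiable ℝ Y)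
    (hup : ∀ t, 0 ≤ t → deriv Y t ≤ -a * tanh (Y t)) {t : ℝ} (ht : 0 ≤ t) :
    sinh (Y t) ≤ sinh (Y 0) * exp (-a * t) := by
  refine le_mul_exp_of_hasDerivAt_of_le_mul (fun s _ ↦ (hdiff s).hasDerivAt.sinh) (fun s hs ↦ ?_) ht
  have := mul_le_mul_of_nonneg_left (hup s hs) (cosh_pos (Y s)).le
  rwa [tanh_eq_sinh_div_cosh, mul_left_comm, mul_div_cancel₀ _ (cosh_pos (Y s)).ne'] at this

theorem mul_exp_le_cosh_of_neg_mul_coth_le_deriv (hdiff : Differentiable ℝ Y)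
    (hpos : ∀ t, 0 ≤ t → 0 < Y t)
    (hlow : ∀ t, 0 ≤ t → -a * (cosh (Y t) / sinh (Y t)) ≤ deriv Y t) {t : ℝ} (ht : 0 ≤ t) :
    cosh (Y 0) * exp (-a * t) ≤ cosh (Y t) := by
  refine mul_exp_le_of_hasDerivAt_of_mul_le (fun s _ ↦ (hdiff s).hasDerivAt.cosh) (fun s hs ↦ ?_) ht
  have hsinh : 0 < sinh (Y s) := sinh_pos_iff.mpr (hpos s hs)
  have := mul_le_mul_of_nonneg_left (hlow s hs) hsinh.le
  rwa [mul_left_comm, mul_div_cancel₀ _ hsinh.ne'] at this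

end RadialLoewnerComparison

theorem stmt_10_general (a : ℝ) (y : ℝ) (Y : ℝ → ℝ)
    (hdiff : Differentiable ℝ Y) (hpos : ∀ t, 0 ≤ t → 0 < Y t) (hY0 : Y 0 = y)
    (hlow : ∀ t, 0 ≤ t → -a * (Real.cosh (Y t) / Real.sinh (Y t)) ≤ deriv Y t)
    (hup : ∀ t, 0 ≤ t → deriv Y t ≤ -a * Real.tanh (Y t)) :
    ∀ t, 0 ≤ t → 1 ≤ Real.cosh y * Real.exp (-a*t) →
      arcosh (Real.cosh y * Real.exp (-a*t)) ≤ Y t ∧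
      Y t ≤ Real.arsinh (Real.sinh y * Real.exp (-a*t)) := by
  intro t ht _
  subst hY0
  constructor
  · -- `arcosh` is definitionally `Real.arcosh`
    calc arcosh (Real.cosh (Y 0) * Real.exp (-a * t)) ≤ Real.arcosh (Real.cosh (Y t)) :=
          (Real.arcosh_le_arcosh (by positivity) (Real.cosh_pos _)).mpr
            (mul_exp_le_cosh_of_neg_mul_coth_le_deriv hdiff hpos hlow ht)
      _ = Y t := Real.arcosh_cosh (hpos t ht).le
  · calc Y t = Real.arsinh (Real.sinh (Y t)) := (Real.arsinh_sinh _).symm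
      _ ≤ Real.arsinh (Real.sinh (Y 0) * Real.exp (-a * t)) :=
          Real.arsinh_le_arsinh.mpr (sinh_le_mul_exp_of_deriv_le_neg_mul_tanh hdiff hup ht)

/-- deterministic comparison for the imaginary part of the
radial Loewner flow: if -a coth(Y_t) ≤ Y_t' ≤ -a tanh(Y_t) with Y_0 = y > 0, then
arccosh((cosh y)e^{-at}) ≤ Y_t ≤ arcsinh((sinh y)e^{-at}) as long as (cosh y)e^{-at} ≥ 1. -/
theorem stmt_10 (a : ℝ) (ha : 0 < a) (y : ℝ) (hy : 0 < y) (Y : ℝ → ℝ)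
    (hdiff : Differentiable ℝ Y) (hpos : ∀ t, 0 ≤ t → 0 < Y t) (hY0 : Y 0 = y)
    (hlow : ∀ t, 0 ≤ t → -a * (Real.cosh (Y t) / Real.sinh (Y t)) ≤ deriv Y t)
    (hup : ∀ t, 0 ≤ t → deriv Y t ≤ -a * Real.tanh (Y t)) :
    ∀ t, 0 ≤ t → 1 ≤ Real.cosh y * Real.exp (-a*t) →
      arcosh (Real.cosh y * Real.exp (-a*t)) ≤ Y t ∧
      Y t ≤ Real.arsinh (Real.sinh y * Real.exp (-a*t)) :=
  stmt_10_general a y Y hdiff hpos hY0 hlow hup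
end
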